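/- Let d, n ≥ 1 and let f : ℝ^d → M_n(ℂ) be measurable and bounded. Suppose that for every δ > 0 there exist a matrix trigonometric polynomial T and a number R > 0 such that for all r ≥ R and all γ ∈ ℤ^d: r^{−d} ∫_{r(γ + [0,1]^d)} |f(ξ) − T(ξ)| dξ ≤ δ. Then there exists a matrix f⁰ ∈ M_n(ℂ) such that for every δ > 0 there is R > 0 with | r^{−d} ∫_{r(γ + [0,1]^d)} f(ξ) dξ − f⁰ | ≤ δ for all r ≥ R and all γ ∈ ℤ^d; in particular, the mean value of f over the scaled cells r(γ + [0,1]^d) exists, is independent of γ ∈ ℤ^d, and the convergence as r → ∞ is uniform in γ. -/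

import Mathlib

open MeasureTheory

noncomputable section

/-- `ℝ^d` with its Euclidean structure. -/
abbrev Ed (d : ℕ) := EuclideanSpace ℝ (Fin d)

/-- The cell `r•γ + [0,r]^d` of the rescaled lattice `rℤ^d`. -/
def cell (d : ℕ) (r : ℝ) (γ : Fin d → ℤ) : Set (Ed d) :=
  {x | ∀ i, r * γ i ≤ x i ∧ x i ≤ r * γ i + r}

/-- Frobenius norm of a complex `n × n` matrix. -/
def frob {n : ℕ} (A : Matrix (Fin n) (Fin n) ℂ) : ℝ :=
  Real.sqrt (∑ i, ∑ k, ‖A i k‖ ^ 2)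

/-- The matrix trigonometric polynomial `ξ ↦ Σ_{α ∈ s} e^{i α·ξ} c α`. -/
def trigPoly {d n : ℕ} (s : Finset (Ed d)) (c : Ed d → Matrix (Fin n) (Fin n) ℂ)
    (ξ : Ed d) : Matrix (Fin n) (Fin n) ℂ :=
  ∑ α ∈ s, Complex.exp (Complex.I * ((inner ℝ α ξ : ℝ) : ℂ)) • c α

/-!
The cell averages of `ξ ↦ e^{i α·ξ}` factor into one-dimensional integrals; when `α_j ≠ 0` the
`j`-th one is at most `2 / |α_j|` while the others are at most `r`, so the average is
`O(1 / r)` uniformly in `γ`. Hence the cell averages of a trigonometric polynomial converge,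
uniformly in `γ`, to its constant coefficient. The averages of `f` stay within `δ` of those of a
`δ`-approximating polynomial, so they are uniformly Cauchy as `r → ∞`, and completeness of
`M_n(ℂ)` provides the mean value. Uniformity in `γ` is convergence along `atTop ×ˢ ⊤` on
`ℝ × ℤ^d`.
-/

open Filter Topology

section Cells

variable {d : ℕ}

lemma cell_eq_preimage (r : ℝ) (γ : Fin d → ℤ) :
    cell d r γ = WithLp.ofLp ⁻¹' Set.univ.pi fun i => Set.Icc (r * γ i) (r * γ i + r) := by
  ext ξ
  simp only [cell, Set.mem_preimage, Set.mem_univ_pi, Set.mem_Icc, Set.mem_ofPred_eq]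

lemma isCompact_cell (r : ℝ) (γ : Fin d → ℤ) : IsCompact (cell d r γ) := by
  rw [cell_eq_preimage]
  exact (PiLp.homeomorph 2 _).isCompact_preimage.2 (isCompact_univ_pi fun _ => isCompact_Icc)

lemma volume_cell {r : ℝ} (hr : 0 ≤ r) (γ : Fin d → ℤ) :
    volume (cell d r γ) = ENNReal.ofReal (r ^ d) := by
  rw [cell_eq_preimage, (PiLp.volume_preserving_ofLp (Fin d)).measure_preimage
    (MeasurableSet.univ_pi fun _ => measurableSet_Icc).nullMeasurableSet, volume_pi_pi]
  simp [ENNReal.ofReal_pow hr]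

lemma setIntegral_cell_prod (r : ℝ) (γ : Fin d → ℤ) (g : Fin d → ℝ → ℂ) :
    ∫ ξ in cell d r γ, ∏ i, g i (ξ i) = ∏ i, ∫ t in Set.Icc (r * γ i) (r * γ i + r), g i t := by
  rw [cell_eq_preimage, (PiLp.volume_preserving_ofLp (Fin d)).setIntegral_preimage_emb
    (MeasurableEquiv.toLp 2 (Fin d → ℝ)).symm.measurableEmbedding (fun y => ∏ i, g i (y i)),
    volume_pi, Measure.restrict_pi_pi, integral_fintype_prod_eq_prod]

end Cells

lemma norm_exp_I_mul_ofReal (x : ℝ) : ‖Complex.exp (Complex.I * x)‖ = 1 := by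
  rw [mul_comm, Complex.norm_exp_ofReal_mul_I]

lemma exp_I_mul_inner {d : ℕ} (α ξ : Ed d) :
    Complex.exp (Complex.I * ((inner ℝ α ξ : ℝ) : ℂ))
      = ∏ i, Complex.exp (Complex.I * (α i * ξ i : ℝ)) := by
  rw [← Complex.exp_sum, ← Finset.mul_sum, ← Complex.ofReal_sum]
  simp [PiLp.inner_apply, mul_comm]

lemma norm_setIntegral_Icc_exp_le_length (a : ℝ) {r : ℝ} (hr : 0 ≤ r) (β : ℝ) :
    ‖∫ t in Set.Icc a (a + r), Complex.exp (Complex.I * (β * t : ℝ))‖ ≤ r := by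
  have := norm_setIntegral_le_of_norm_le_const (μ := volume) (s := Set.Icc a (a + r)) (C := 1)
    (by simp [Real.volume_Icc]) fun t _ => (norm_exp_I_mul_ofReal (β * t)).le
  simpa [Real.volume_real_Icc, hr] using this

lemma norm_setIntegral_Icc_exp_le (a r : ℝ) (hr : 0 ≤ r) {β : ℝ} (hβ : β ≠ 0) :
    ‖∫ t in Set.Icc a (a + r), Complex.exp (Complex.I * (β * t : ℝ))‖ ≤ 2 / |β| := by
  have hIβ : Complex.I * β ≠ 0 := by simp [hβ]
  have hint : ∫ t in Set.Icc a (a + r), Complex.exp (Complex.I * (β * t : ℝ))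
      = (Complex.exp (Complex.I * β * (a + r : ℝ)) - Complex.exp (Complex.I * β * a))
        / (Complex.I * β) := by
    rw [integral_Icc_eq_integral_Ioc, ← intervalIntegral.integral_of_le (by linarith)]
    simp_rw [Complex.ofReal_mul, ← mul_assoc]
    rw [integral_exp_mul_complex hIβ]
  rw [hint, norm_div, norm_mul, Complex.norm_I, one_mul, Complex.norm_real, Real.norm_eq_abs]
  gcongr
  refine (norm_sub_le _ _).trans ?_
  simp only [mul_assoc, ← Complex.ofReal_mul, norm_exp_I_mul_ofReal]
  norm_num

lemma Filter.eventually_atTop_prod_top_iff {α β : Type*} [Nonempty α] [SemilatticeSup α]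
    {P : α × β → Prop} : (∀ᶠ p in atTop ×ˢ ⊤, P p) ↔ ∃ R, ∀ r ≥ R, ∀ b, P (r, b) :=
  mem_prod_top.trans eventually_atTop

lemma exists_tendsto_of_forall_eventually_dist_le {ι X : Type*} [PseudoMetricSpace X]
    [CompleteSpace X] {l : Filter ι} [l.NeBot] {f : ι → X}
    (h : ∀ ε > 0, ∃ (g : ι → X) (y : X), Tendsto g l (𝓝 y) ∧ ∀ᶠ i in l, dist (f i) (g i) ≤ ε) :
    ∃ y, Tendsto f l (𝓝 y) := by
  refine cauchy_map_iff_exists_tendsto.1 (Metric.cauchy_iff.2 ⟨inferInstance, fun ε hε => ?_⟩)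
  obtain ⟨g, y, hgy, hfg⟩ := h (ε / 4) (by positivity)
  have hfy : ∀ᶠ i in l, dist (f i) y < ε / 2 := by
    filter_upwards [hfg, hgy.eventually (Metric.ball_mem_nhds y (by positivity : 0 < ε / 4))]
      with i hfgi hgyi
    calc dist (f i) y ≤ dist (f i) (g i) + dist (g i) y := dist_triangle _ _ _
      _ < ε / 4 + ε / 4 := add_lt_add_of_le_of_lt hfgi hgyi
      _ = ε / 2 := by ring
  refine ⟨Metric.ball y (ε / 2), hfy, fun a ha b hb => ?_⟩
  linarith [dist_triangle_right a b y, Metric.mem_ball.1 ha, Metric.mem_ball.1 hb]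

section Averages

variable {d : ℕ} {E : Type*} [NormedAddCommGroup E] [NormedSpace ℝ E]

def cellAvg (g : Ed d → E) (r : ℝ) (γ : Fin d → ℤ) : E :=
  (r ^ d)⁻¹ • ∫ ξ in cell d r γ, g ξ

lemma cellAvg_const [CompleteSpace E] {r : ℝ} (hr : 0 < r) (γ : Fin d → ℤ) (c : E) :
    cellAvg (fun _ => c) r γ = c := by
  rw [cellAvg, setIntegral_const, measureReal_def, volume_cell hr.le,
    ENNReal.toReal_ofReal (by positivity), smul_smul, inv_mul_cancel₀ (by positivity), one_smul]

lemma cellAvg_finsetSum {ι : Type*} (s : Finset ι) {g : ι → Ed d → E} {r : ℝ} {γ : Fin d → ℤ}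
    (hg : ∀ i ∈ s, IntegrableOn (g i) (cell d r γ)) :
    cellAvg (fun ξ => ∑ i ∈ s, g i ξ) r γ = ∑ i ∈ s, cellAvg (g i) r γ := by
  rw [cellAvg, integral_finsetSum s hg, Finset.smul_sum]
  rfl

lemma norm_cellAvg_sub_le {g h : Ed d → E} {r : ℝ} (hr : 0 ≤ r) {γ : Fin d → ℤ}
    (hg : IntegrableOn g (cell d r γ)) (hh : IntegrableOn h (cell d r γ)) :
    ‖cellAvg g r γ - cellAvg h r γ‖ ≤ (r ^ d)⁻¹ * ∫ ξ in cell d r γ, ‖g ξ - h ξ‖ := by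
  rw [cellAvg, cellAvg, ← smul_sub, ← integral_sub hg hh, norm_smul,
    Real.norm_of_nonneg (by positivity)]
  exact mul_le_mul_of_nonneg_left (norm_integral_le_integral_norm _) (by positivity)

end Averages

section ExponentialAverages

variable {d : ℕ}

lemma norm_cellAvg_exp_le {α : Ed d} {j : Fin d} (hj : α j ≠ 0) {r : ℝ} (hr : 0 < r)
    (γ : Fin d → ℤ) :
    ‖cellAvg (fun ξ => Complex.exp (Complex.I * ((inner ℝ α ξ : ℝ) : ℂ))) r γ‖
      ≤ 2 / (|α j| * r) := by
  simp_rw [cellAvg, exp_I_mul_inner]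
  rw [setIntegral_cell_prod r γ fun i t => Complex.exp (Complex.I * (α i * t : ℝ)), norm_smul,
    norm_prod, ← Finset.mul_prod_erase _ _ (Finset.mem_univ j),
    Real.norm_of_nonneg (by positivity)]
  have hrest : ∏ i ∈ Finset.univ.erase j,
      ‖∫ t in Set.Icc (r * γ i) (r * γ i + r), Complex.exp (Complex.I * (α i * t : ℝ))‖
        ≤ r ^ (d - 1) := by
    refine (Finset.prod_le_prod (fun _ _ => norm_nonneg _) fun i _ =>
      norm_setIntegral_Icc_exp_le_length _ hr.le (α i)).trans_eq ?_
    simp [Finset.card_erase_of_mem]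
  have hd : r ^ d = r ^ (d - 1) * r := by
    rw [← pow_succ, Nat.sub_add_cancel (Nat.one_le_iff_ne_zero.2 (Fin.pos j).ne')]
  calc _ ≤ (r ^ d)⁻¹ * (2 / |α j| * r ^ (d - 1)) := by
        gcongr
        exact norm_setIntegral_Icc_exp_le _ _ hr.le hj
    _ = 2 / (|α j| * r) := by
        rw [hd]
        field_simp

lemma tendsto_cellAvg_exp (α : Ed d) :
    Tendsto (fun p : ℝ × (Fin d → ℤ) =>
        cellAvg (fun ξ => Complex.exp (Complex.I * ((inner ℝ α ξ : ℝ) : ℂ))) p.1 p.2)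
      (atTop ×ˢ ⊤) (𝓝 (if α = 0 then 1 else 0)) := by
  have hpos : ∀ᶠ p : ℝ × (Fin d → ℤ) in atTop ×ˢ ⊤, 0 < p.1 :=
    tendsto_fst.eventually (eventually_gt_atTop 0)
  split_ifs with hα
  · subst hα
    refine tendsto_const_nhds.congr' (hpos.mono fun p hp => ?_)
    simp [cellAvg_const hp]
  · obtain ⟨j, hj⟩ : ∃ j, α j ≠ 0 := by
      by_contra! h
      exact hα (PiLp.ext h)
    refine squeeze_zero_norm' (hpos.mono fun p hp => norm_cellAvg_exp_le hj hp p.2) ?_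
    exact tendsto_const_nhds.div_atTop
      ((tendsto_fst (f := atTop) (g := ⊤)).const_mul_atTop (abs_pos.2 hj))

end ExponentialAverages

section TrigonometricSums

variable {d : ℕ} {E : Type*} [NormedAddCommGroup E] [NormedSpace ℂ E]

def trigSum (s : Finset (Ed d)) (c : Ed d → E) (ξ : Ed d) : E :=
  ∑ α ∈ s, Complex.exp (Complex.I * ((inner ℝ α ξ : ℝ) : ℂ)) • c α

lemma continuous_trigSum (s : Finset (Ed d)) (c : Ed d → E) : Continuous (trigSum s c) := by
  unfold trigSum
  fun_prop

lemma cellAvg_trigSum [CompleteSpace E] (s : Finset (Ed d)) (c : Ed d → E) (r : ℝ)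
    (γ : Fin d → ℤ) :
    cellAvg (trigSum s c) r γ = ∑ α ∈ s,
      cellAvg (fun ξ => Complex.exp (Complex.I * ((inner ℝ α ξ : ℝ) : ℂ))) r γ • c α := by
  have hint : ∀ α ∈ s, IntegrableOn
      (fun ξ => Complex.exp (Complex.I * ((inner ℝ α ξ : ℝ) : ℂ)) • c α) (cell d r γ) :=
    fun α _ => (by fun_prop : Continuous fun ξ : Ed d =>
      Complex.exp (Complex.I * ((inner ℝ α ξ : ℝ) : ℂ)) • c α).continuousOn.integrableOn_compact
        (isCompact_cell r γ)
  unfold trigSum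
  rw [cellAvg_finsetSum s hint]
  refine Finset.sum_congr rfl fun α _ => ?_
  rw [cellAvg, cellAvg, integral_smul_const, smul_assoc]

lemma tendsto_cellAvg_trigSum [CompleteSpace E] (s : Finset (Ed d)) (c : Ed d → E) :
    Tendsto (fun p : ℝ × (Fin d → ℤ) => cellAvg (trigSum s c) p.1 p.2) (atTop ×ˢ ⊤)
      (𝓝 (∑ α ∈ s, (if α = 0 then (1 : ℂ) else 0) • c α)) := by
  simp_rw [cellAvg_trigSum]
  exact tendsto_finsetSum s fun α _ => (tendsto_cellAvg_exp α).smul_const (c α)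

theorem exists_tendsto_cellAvg_of_approx [CompleteSpace E] {g : Ed d → E}
    (hg : LocallyIntegrable g)
    (happrox : ∀ δ > 0, ∃ (s : Finset (Ed d)) (c : Ed d → E),
      ∀ᶠ p : ℝ × (Fin d → ℤ) in atTop ×ˢ ⊤,
        (p.1 ^ d)⁻¹ * ∫ ξ in cell d p.1 p.2, ‖g ξ - trigSum s c ξ‖ ≤ δ) :
    ∃ g₀, Tendsto (fun p : ℝ × (Fin d → ℤ) => cellAvg g p.1 p.2) (atTop ×ˢ ⊤) (𝓝 g₀) := by
  refine exists_tendsto_of_forall_eventually_dist_le fun δ hδ => ?_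
  obtain ⟨s, c, hsc⟩ := happrox δ hδ
  refine ⟨_, _, tendsto_cellAvg_trigSum s c, ?_⟩
  filter_upwards [hsc, tendsto_fst.eventually (eventually_ge_atTop 0)] with p hp hp0
  rw [dist_eq_norm]
  exact (norm_cellAvg_sub_le hp0 (hg.integrableOn_isCompact (isCompact_cell _ _))
    ((continuous_trigSum s c).continuousOn.integrableOn_compact (isCompact_cell _ _))).trans hp

end TrigonometricSums

section Frobenius

variable {n : ℕ}

-- Integrals are taken in `EuclideanSpace`, isometric to `(M_n(ℂ), frob)`: the topology of the
-- Frobenius norm instance on `Matrix` is not reducibly `Matrix`'s own, so Bochner integration of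
-- matrices with that instance does not elaborate.
def frobEquiv : Matrix (Fin n) (Fin n) ℂ ≃ₗ[ℂ] EuclideanSpace ℂ (Fin n × Fin n) :=
  (Matrix.ofLinearEquiv ℂ).symm ≪≫ₗ (LinearEquiv.curry ℂ ℂ (Fin n) (Fin n)).symm ≪≫ₗ
    (WithLp.linearEquiv 2 ℂ _).symm

lemma frobEquiv_apply (A : Matrix (Fin n) (Fin n) ℂ) (pq : Fin n × Fin n) :
    frobEquiv A pq = A pq.1 pq.2 := rfl

lemma frob_eq_norm_frobEquiv (A : Matrix (Fin n) (Fin n) ℂ) : frob A = ‖frobEquiv A‖ := by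
  rw [frob, EuclideanSpace.norm_eq, Fintype.sum_prod_type]
  rfl

lemma frobEquiv_trigPoly {d : ℕ} (s : Finset (Ed d)) (c : Ed d → Matrix (Fin n) (Fin n) ℂ)
    (ξ : Ed d) : frobEquiv (trigPoly s c ξ) = trigSum s (frobEquiv ∘ c) ξ := by
  simp only [trigPoly, trigSum, map_sum, map_smul, Function.comp_apply]

lemma locallyIntegrable_frobEquiv {d : ℕ} {f : Ed d → Matrix (Fin n) (Fin n) ℂ}
    (hmeas : ∀ p q, Measurable fun ξ => f ξ p q) {M : ℝ} (hM : ∀ ξ, frob (f ξ) ≤ M) :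
    LocallyIntegrable fun ξ => frobEquiv (f ξ) := by
  refine locallyIntegrable_iff.2 fun K hK => integrable_piLp_iff.2 fun pq =>
    Measure.integrableOn_of_bounded (M := M) hK.measure_lt_top.ne
      (hmeas pq.1 pq.2).aestronglyMeasurable (Eventually.of_forall fun ξ => ?_)
  calc ‖frobEquiv (f ξ) pq‖ ≤ ‖frobEquiv (f ξ)‖ := PiLp.norm_apply_le _ pq
    _ = frob (f ξ) := (frob_eq_norm_frobEquiv _).symm
    _ ≤ M := hM ξ

lemma frobEquiv_entrywise_cellAvg {d : ℕ} {f : Ed d → Matrix (Fin n) (Fin n) ℂ} {r : ℝ}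
    {γ : Fin d → ℤ} (hf : IntegrableOn (fun ξ => frobEquiv (f ξ)) (cell d r γ)) :
    frobEquiv (Matrix.of fun p q => ((r : ℂ) ^ d)⁻¹ * ∫ ξ in cell d r γ, f ξ p q)
      = cellAvg (fun ξ => frobEquiv (f ξ)) r γ := by
  ext pq
  rw [frobEquiv_apply, cellAvg, PiLp.smul_apply, eval_integral_piLp (integrable_piLp_iff.1 hf)]
  simp [frobEquiv_apply, Complex.real_smul]

end Frobenius

theorem stmt_16_general (d n : ℕ)
    (f : Ed d → Matrix (Fin n) (Fin n) ℂ)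
    (hmeas : ∀ p q, Measurable fun ξ => f ξ p q)
    (hbdd : ∃ M : ℝ, ∀ ξ, frob (f ξ) ≤ M)
    (happrox : ∀ δ : ℝ, 0 < δ →
      ∃ (s : Finset (Ed d)) (c : Ed d → Matrix (Fin n) (Fin n) ℂ) (R : ℝ),
        0 < R ∧
        ∀ r : ℝ, R ≤ r → ∀ γ : Fin d → ℤ,
          (r ^ d)⁻¹ * ∫ ξ in cell d r γ, frob (f ξ - trigPoly s c ξ) ≤ δ) :
    ∃ f₀ : Matrix (Fin n) (Fin n) ℂ,
      ∀ δ : ℝ, 0 < δ → ∃ R : ℝ, 0 < R ∧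
        ∀ r : ℝ, R ≤ r → ∀ γ : Fin d → ℤ,
          frob ((Matrix.of fun p q => ((r : ℂ) ^ d)⁻¹ * ∫ ξ in cell d r γ, f ξ p q) - f₀)
            ≤ δ := by
  obtain ⟨M, hM⟩ := hbdd
  have hg := locallyIntegrable_frobEquiv hmeas hM
  obtain ⟨g₀, hg₀⟩ := exists_tendsto_cellAvg_of_approx hg fun δ hδ => by
    obtain ⟨s, c, R, -, hR⟩ := happrox δ hδ
    refine ⟨s, frobEquiv ∘ c, eventually_atTop_prod_top_iff.2 ⟨R, fun r hr γ => ?_⟩⟩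
    simpa only [frob_eq_norm_frobEquiv, map_sub, frobEquiv_trigPoly] using hR r hr γ
  refine ⟨frobEquiv.symm g₀, fun δ hδ => ?_⟩
  obtain ⟨R, hR⟩ := eventually_atTop_prod_top_iff.1 (Metric.tendsto_nhds.1 hg₀ δ hδ)
  refine ⟨max R 1, by positivity, fun r hr γ => ?_⟩
  rw [frob_eq_norm_frobEquiv, map_sub, LinearEquiv.apply_symm_apply,
    frobEquiv_entrywise_cellAvg (hg.integrableOn_isCompact (isCompact_cell r γ)), ← dist_eq_norm]
  exact (hR r (le_of_max_le_left hr) γ).le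

/-- Claim (5.29) of Section 3.5: a bounded measurable matrix
function approximable by trigonometric polynomials uniformly in the Weyl sense
(over all scaled cells `r(γ + [0,1]^d)`, `γ ∈ ℤ^d`) possesses a mean value `f⁰`,
independent of `γ`, with uniform-in-`γ` convergence of the cell averages. -/
theorem stmt_16 (d n : ℕ) (hd : 1 ≤ d) (hn : 1 ≤ n)
    (f : Ed d → Matrix (Fin n) (Fin n) ℂ)
    (hmeas : ∀ p q, Measurable fun ξ => f ξ p q)
    (hbdd : ∃ M : ℝ, ∀ ξ, frob (f ξ) ≤ M)
    (happrox : ∀ δ : ℝ, 0 < δ →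
      ∃ (s : Finset (Ed d)) (c : Ed d → Matrix (Fin n) (Fin n) ℂ) (R : ℝ),
        0 < R ∧
        ∀ r : ℝ, R ≤ r → ∀ γ : Fin d → ℤ,
          (r ^ d)⁻¹ * ∫ ξ in cell d r γ, frob (f ξ - trigPoly s c ξ) ≤ δ) :
    ∃ f₀ : Matrix (Fin n) (Fin n) ℂ,
      ∀ δ : ℝ, 0 < δ → ∃ R : ℝ, 0 < R ∧
        ∀ r : ℝ, R ≤ r → ∀ γ : Fin d → ℤ,
          frob ((Matrix.of fun p q => ((r : ℂ) ^ d)⁻¹ * ∫ ξ in cell d r γ, f ξ p q) - f₀)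
            ≤ δ :=
  stmt_16_general d n f hmeas hbdd happrox
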